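/- arXiv:2403.06726 — 3 statements merged into one kernel-verified Lean document; each statement's English description precedes it below -/
import Mathlib

section
/- Let p ≥ 1, K ≥ 1, τ > 0, and let π_1, …, π_K be positive reals with Σ_j π_j = 1. For each class j ∈ {1,…,K} let ν_j be a Borel probability measure on the unit sphere S^{p-1} of ℝ^p and let (Z_{j,a})_{a≥1} be i.i.d. with distribution ν_j, with the sequences independent across j. Fix a unit vector z ∈ S^{p-1} and a class y ∈ {1,…,K}. For each N, let N_1(N), …, N_K(N) be positive integers with Σ_j N_j(N) = N and N_j(N)/N → π_j as N → ∞. Define L_N = -(1/(τ · N_y(N))) Σ_{a=1}^{N_y(N)} ⟨z, Z_{y,a}⟩ + log( Σ_{j=1}^{K} Σ_{a=1}^{N_j(N)} exp(⟨z, Z_{j,a}⟩/τ) ). Then almost surely, L_N − log N converges as N → ∞ to L_out := -(1/τ)⟨z, ∫ w dν_y(w)⟩ + log( Σ_{j=1}^{K} π_j ∫ exp(⟨z, w⟩/τ) dν_j(w) ). -/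
open scoped RealInnerProductSpace BigOperators
open MeasureTheory ProbabilityTheory Filter Topology Finset

/-!
Class by class, the strong law of large numbers gives almost surely
`(1/N_j) ∑_a ⟪z, Z_{j,a}⟫ → ⟪z, 𝔼 ν_j⟫` and `(1/N_j) ∑_a exp(⟪z, Z_{j,a}⟫/τ) → ∫ exp(⟪z, w⟫/τ) dν_j`,
since `N_j → ∞` (as `N_j / N → π_j > 0`) and every integrand is continuous on the compact sphere.
Subtracting `log N` turns the log-sum-exp term into the log of `∑_j (N_j / N) · (class average)`,
which converges to `log ∑_j π_j ∫ exp(⟪z, w⟫/τ) dν_j` because this limit is positive.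
-/

theorem Continuous.integrable_of_ae_mem_compact {X E : Type*} [TopologicalSpace X] [T2Space X]
    [MeasurableSpace X] [OpensMeasurableSpace X] [NormedAddCommGroup E] {μ : Measure X}
    [IsFiniteMeasureOnCompacts μ] {K : Set X} {f : X → E} (hf : Continuous f)
    (hK : IsCompact K) (hμK : ∀ᵐ x ∂μ, x ∈ K) : Integrable f μ := by
  simpa [IntegrableOn, Measure.restrict_eq_self_of_ae_mem hμK] using
    hf.continuousOn.integrableOn_compact (μ := μ) hK

theorem tendsto_atTop_of_tendsto_natCast_div {u : ℕ → ℕ} {c : ℝ} (hc : 0 < c)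
    (hu : Tendsto (fun N => (u N : ℝ) / N) atTop (𝓝 c)) : Tendsto u atTop atTop := by
  rw [← tendsto_natCast_atTop_iff (R := ℝ)]
  refine (hu.pos_mul_atTop hc tendsto_natCast_atTop_atTop).congr' ?_
  filter_upwards [eventually_ne_atTop 0] with N hN
  field_simp

theorem Real.tendsto_log_sub_log_natCast {s : ℕ → ℝ} {L : ℝ} (hL : 0 < L)
    (hs : Tendsto (fun N => s N / N) atTop (𝓝 L)) :
    Tendsto (fun N : ℕ => Real.log (s N) - Real.log N) atTop (𝓝 (Real.log L)) := by
  refine ((Real.continuousAt_log hL.ne').tendsto.comp hs).congr' ?_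
  filter_upwards [hs.eventually (eventually_gt_nhds hL), eventually_ne_atTop 0] with N hsN hN
  have hs0 : s N ≠ 0 := by
    rintro h
    simp [h] at hsN
  exact Real.log_div hs0 (Nat.cast_ne_zero.mpr hN)

theorem Finset.sum_range_div_eq_mul_average (x : ℕ → ℝ) (n N : ℕ) :
    (∑ a ∈ range n, x a) / N = n / N * ((∑ a ∈ range n, x a) / n) := by
  rcases eq_or_ne n 0 with rfl | hn
  · simp
  · field_simp

section StrongLaw

variable {Ω E : Type*} [MeasurableSpace Ω] [MeasurableSpace E] {μ : Measure Ω}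

theorem ae_tendsto_average_of_pairwise_indepFun {ν : Measure E} {X : ℕ → Ω → E}
    (hX : ∀ a, Measurable (X a)) (hindep : Pairwise fun a b => IndepFun (X a) (X b) μ)
    (hident : ∀ a, μ.map (X a) = ν) {f : E → ℝ} (hf : Measurable f) (hint : Integrable f ν) :
    ∀ᵐ ω ∂μ, Tendsto (fun n : ℕ => (∑ a ∈ range n, f (X a ω)) / n) atTop
      (𝓝 (∫ w, f w ∂ν)) := by
  have hident' : ∀ a, IdentDistrib (f ∘ X a) (f ∘ X 0) μ μ := fun a =>
    IdentDistrib.comp ⟨(hX a).aemeasurable, (hX 0).aemeasurable, by rw [hident, hident]⟩ hf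
  have hint0 : Integrable (f ∘ X 0) μ := by
    rw [← hident 0] at hint
    exact hint.comp_measurable (hX 0)
  have hmean : μ[f ∘ X 0] = ∫ w, f w ∂ν := by
    rw [← hident 0, integral_map (hX 0).aemeasurable hf.aestronglyMeasurable]
    rfl
  have hlaw := strong_law_ae_real (fun a => f ∘ X a) hint0
    (fun a b hab => (hindep hab).comp hf hf) hident'
  rw [hmean] at hlaw
  exact hlaw

theorem ae_forall_tendsto_average_of_iIndepFun {ι α : Type*} [Countable ι]
    {ν : ι → Measure E} {Z : ι × ℕ → Ω → E} (hZ : ∀ k, Measurable (Z k))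
    (hindep : iIndepFun Z μ) (hident : ∀ j a, μ.map (Z (j, a)) = ν j) {f : E → ℝ}
    (hf : Measurable f) (hint : ∀ j, Integrable f (ν j)) {l : Filter α} {n : ι → α → ℕ}
    (hn : ∀ j, Tendsto (n j) l atTop) :
    ∀ᵐ ω ∂μ, ∀ j, Tendsto (fun N => (∑ a ∈ range (n j N), f (Z (j, a) ω)) / n j N) l
      (𝓝 (∫ w, f w ∂ν j)) := by
  rw [ae_all_iff]
  intro j
  filter_upwards [ae_tendsto_average_of_pairwise_indepFun (fun a => hZ (j, a))
    (fun a b hab => hindep.indepFun (by simpa using hab)) (hident j) hf (hint j)] with ω hω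
  exact hω.comp (hn j)

end StrongLaw

theorem stmt_2_general (p K : ℕ) (τ : ℝ)
    (π : Fin K → ℝ) (hπpos : ∀ j, 0 < π j)
    (ν : Fin K → Measure (EuclideanSpace ℝ (Fin p)))
    [∀ j, IsProbabilityMeasure (ν j)]
    (hν : ∀ j, ∀ᵐ w ∂(ν j), ‖w‖ = 1)
    {Ω : Type*} [MeasurableSpace Ω] (μ : Measure Ω)
    (Z : Fin K × ℕ → Ω → EuclideanSpace ℝ (Fin p))
    (hmeas : ∀ k, Measurable (Z k))
    (hindep : iIndepFun Z μ)
    (hident : ∀ j a, Measure.map (Z (j, a)) μ = ν j)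
    (z : EuclideanSpace ℝ (Fin p))
    (y : Fin K)
    (Nc : Fin K → ℕ → ℕ)
    (hNlim : ∀ j, Tendsto (fun N : ℕ => (Nc j N : ℝ) / N) atTop (nhds (π j))) :
    ∀ᵐ ω ∂μ,
      Tendsto (fun N : ℕ =>
          (-(1 / (τ * (Nc y N : ℝ))) *
              ∑ a ∈ Finset.range (Nc y N), ⟪z, Z (y, a) ω⟫ +
            Real.log (∑ j : Fin K, ∑ a ∈ Finset.range (Nc j N),
              Real.exp (⟪z, Z (j, a) ω⟫ / τ))) - Real.log N)
        atTop
        (nhds (-(1 / τ) * ⟪z, ∫ w, w ∂(ν y)⟫ +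
          Real.log (∑ j : Fin K, π j * ∫ w, Real.exp (⟪z, w⟫ / τ) ∂(ν j)))) := by
  have hint : ∀ {E : Type} [NormedAddCommGroup E] {f : EuclideanSpace ℝ (Fin p) → E},
      Continuous f → ∀ j, Integrable f (ν j) := fun hf j =>
    hf.integrable_of_ae_mem_compact (isCompact_sphere 0 1)
      ((hν j).mono fun _ hw => mem_sphere_zero_iff_norm.mpr hw)
  have hinner : Continuous fun w : EuclideanSpace ℝ (Fin p) => ⟪z, w⟫ := by fun_prop
  have hexp : Continuous fun w : EuclideanSpace ℝ (Fin p) => Real.exp (⟪z, w⟫ / τ) := by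
    fun_prop
  have hn j := tendsto_atTop_of_tendsto_natCast_div (hπpos j) (hNlim j)
  have hpos : 0 < ∑ j, π j * ∫ w, Real.exp (⟪z, w⟫ / τ) ∂ν j :=
    sum_pos (fun j _ => mul_pos (hπpos j) (integral_exp_pos (hint hexp j))) ⟨y, mem_univ y⟩
  rw [← integral_inner (hint (f := fun w => w) continuous_id y) z]
  filter_upwards [ae_forall_tendsto_average_of_iIndepFun hmeas hindep hident
      hinner.measurable (hint hinner) hn,
    ae_forall_tendsto_average_of_iIndepFun hmeas hindep hident
      hexp.measurable (hint hexp) hn] with ω hmean hmgf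
  have hlog : Tendsto (fun N : ℕ => Real.log (∑ j, ∑ a ∈ range (Nc j N),
      Real.exp (⟪z, Z (j, a) ω⟫ / τ)) - Real.log N) atTop (𝓝 (Real.log _)) :=
    Real.tendsto_log_sub_log_natCast hpos <|
      (tendsto_finsetSum univ fun j _ => (hNlim j).mul (hmgf j)).congr fun N => by
        rw [sum_div]
        exact sum_congr rfl fun j _ => (sum_range_div_eq_mul_average _ _ _).symm
  refine (((hmean y).const_mul (-(1 / τ))).add hlog).congr fun N => ?_
  ring

theorem stmt_2 (p K : ℕ) (hp : 1 ≤ p) (hK : 1 ≤ K) (τ : ℝ) (hτ : 0 < τ)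
    (π : Fin K → ℝ) (hπpos : ∀ j, 0 < π j) (hπsum : ∑ j, π j = 1)
    (ν : Fin K → Measure (EuclideanSpace ℝ (Fin p)))
    [∀ j, IsProbabilityMeasure (ν j)]
    (hν : ∀ j, ∀ᵐ w ∂(ν j), ‖w‖ = 1)
    {Ω : Type*} [MeasurableSpace Ω] (μ : Measure Ω) [IsProbabilityMeasure μ]
    (Z : Fin K × ℕ → Ω → EuclideanSpace ℝ (Fin p))
    (hmeas : ∀ k, Measurable (Z k))
    (hindep : iIndepFun Z μ)
    (hident : ∀ j a, Measure.map (Z (j, a)) μ = ν j)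
    (z : EuclideanSpace ℝ (Fin p)) (hz : ‖z‖ = 1)
    (y : Fin K)
    (Nc : Fin K → ℕ → ℕ)
    (hNpos : ∀ᶠ N in atTop, ∀ j, 0 < Nc j N)
    (hNsum : ∀ᶠ N in atTop, ∑ j, Nc j N = N)
    (hNlim : ∀ j, Tendsto (fun N : ℕ => (Nc j N : ℝ) / N) atTop (nhds (π j))) :
    ∀ᵐ ω ∂μ,
      Tendsto (fun N : ℕ =>
          (-(1 / (τ * (Nc y N : ℝ))) *
              ∑ a ∈ Finset.range (Nc y N), ⟪z, Z (y, a) ω⟫ +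
            Real.log (∑ j : Fin K, ∑ a ∈ Finset.range (Nc j N),
              Real.exp (⟪z, Z (j, a) ω⟫ / τ))) - Real.log N)
        atTop
        (nhds (-(1 / τ) * ⟪z, ∫ w, w ∂(ν y)⟫ +
          Real.log (∑ j : Fin K, π j * ∫ w, Real.exp (⟪z, w⟫ / τ) ∂(ν j)))) :=
  stmt_2_general p K τ π hπpos ν hν μ Z hmeas hindep hident z y Nc hNlim
end

section
/- Let p ≥ 1, w ∈ ℝ^p, b ∈ ℝ, y ∈ {-1, 1}, and δ ∈ (0, 1). Let Z, Z_1, …, Z_N be i.i.d. random vectors taking values in the unit sphere S^{p-1} = {v ∈ ℝ^p : ‖v‖₂ = 1}, and define L_log(y, z) = log(1 + exp(-y(⟨w, z⟩ + b))). Then with probability at least 1 − δ/2, E[L_log(y, Z)] − (1/N) Σ_{i=1}^{N} L_log(y, Z_i) ≤ sqrt( (2/N) · E[⟨w, Z − E[Z]⟩²] · ln(2/δ) ) + (ln(2/δ)/(3N)) · log(1 + exp(‖w‖₂ − y·b)). -/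
/-!
On the unit sphere the logistic loss `ℓ(z) = log (1 + exp (-y (⟪w, z⟫ + b)))` takes values in
`[0, M]`, `M = log (1 + exp (‖w‖ - y b))`, and it is a 1-Lipschitz function of the score
`⟪w, z⟫`, so its variance is at most `Var ⟪w, Z⟫ = E ⟪w, Z - E Z⟫²`.

Bernstein's bound `exp u - u - 1 ≤ u² / (2 (1 - u / 3))` for `0 ≤ u < 3`, together with the
monotonicity of `(exp u - u - 1) / u²`, shows that a centred variable bounded above by `M` with
variance `v` is sub-gamma with variance factor `v` and scale `c = M / 3`. Variance factors add
over independent sums, and the Chernoff bound at the parameter `s / (V + c s)`, `s = √(2 V L)`,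
gives `P (S ≥ √(2 V L) + c L) ≤ exp (-L)`. Applied to the `N` centred losses with
`L = log (2 / δ)` and divided by `N`, this is the claim.
-/

open scoped RealInnerProductSpace
open MeasureTheory ProbabilityTheory

open Real Filter Topology
open scoped Nat NNReal

lemma exp_sub_sub_one_eq_tsum (u : ℝ) :
    exp u - u - 1 = ∑' n : ℕ, u ^ (n + 2) / (n + 2)! := by
  have h := Real.summable_pow_div_factorial u
  rw [exp_eq_exp_ℝ, congrFun NormedSpace.exp_eq_tsum_div u, h.tsum_eq_zero_add,
    ((summable_nat_add_iff 1).2 h).tsum_eq_zero_add]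
  simp only [pow_zero, Nat.factorial_zero, Nat.cast_one, div_one, zero_add, pow_one,
    Nat.factorial_one]
  ring

lemma exp_sub_sub_one_le_of_lt_three {u : ℝ} (hu : 0 ≤ u) (hu3 : u < 3) :
    exp u - u - 1 ≤ u ^ 2 / (2 * (1 - u / 3)) := by
  have hq : u / 3 < 1 := by linarith
  have hgeom := summable_geometric_of_lt_one (by positivity) hq
  calc exp u - u - 1 = ∑' n : ℕ, u ^ (n + 2) / (n + 2)! := exp_sub_sub_one_eq_tsum u
    _ ≤ ∑' n : ℕ, u ^ 2 / 2 * (u / 3) ^ n := by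
      refine (summable_nat_add_iff 2).2 (Real.summable_pow_div_factorial u) |>.tsum_le_tsum
        (fun n => ?_) (hgeom.mul_left _)
      have hfact : (2 * 3 ^ n : ℝ) ≤ (n + 2)! := by
        rw [add_comm n]
        exact_mod_cast Nat.factorial_mul_pow_le_factorial (m := 2) (n := n)
      calc u ^ (n + 2) / (n + 2)! ≤ u ^ (n + 2) / (2 * 3 ^ n) := by gcongr
        _ = u ^ 2 / 2 * (u / 3) ^ n := by rw [div_pow]; ring
    _ = u ^ 2 / (2 * (1 - u / 3)) := by
      rw [tsum_mul_left, tsum_geometric_of_lt_one (by positivity) hq]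
      field_simp

lemma exp_le_one_add_add_sq_div_two_of_nonpos {u : ℝ} (hu : u ≤ 0) :
    exp u ≤ 1 + u + u ^ 2 / 2 := by
  have hq := quadratic_le_exp_of_nonneg (neg_nonneg.2 hu)
  have hpos : 0 < 1 + -u + (-u) ^ 2 / 2 := by nlinarith
  -- `(1 + u + u²/2) (1 - u + u²/2) = 1 + u⁴/4 ≥ 1 = exp u * exp (-u)`
  have hprod : exp u * exp (-u) = 1 := by rw [← exp_add, add_neg_cancel, exp_zero]
  refine le_of_mul_le_mul_right ?_ hpos
  nlinarith [exp_pos u, pow_two_nonneg (u ^ 2)]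

-- Monotonicity of `(exp u - u - 1) / u²`, with the denominators cleared.
lemma sq_mul_exp_sub_sub_one_le {u U : ℝ} (hU : 0 ≤ U) (huU : u ≤ U) :
    U ^ 2 * (exp u - u - 1) ≤ u ^ 2 * (exp U - U - 1) := by
  rcases le_total 0 u with hu | hu
  · rw [exp_sub_sub_one_eq_tsum, exp_sub_sub_one_eq_tsum, ← tsum_mul_left, ← tsum_mul_left]
    have hsum (x : ℝ) := (summable_nat_add_iff 2).2 (Real.summable_pow_div_factorial x)
    refine (hsum u).mul_left _ |>.tsum_le_tsum (fun n => ?_) ((hsum U).mul_left _)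
    have : u ^ n ≤ U ^ n := pow_le_pow_left₀ hu huU n
    calc U ^ 2 * (u ^ (n + 2) / (n + 2)!) = u ^ 2 * U ^ 2 * u ^ n / (n + 2)! := by ring
      _ ≤ u ^ 2 * U ^ 2 * U ^ n / (n + 2)! := by gcongr
      _ = u ^ 2 * (U ^ (n + 2) / (n + 2)!) := by ring
  · calc U ^ 2 * (exp u - u - 1) ≤ U ^ 2 * (u ^ 2 / 2) := by
          gcongr; linarith [exp_le_one_add_add_sq_div_two_of_nonpos hu]
      _ = u ^ 2 * (U ^ 2 / 2) := by ring
      _ ≤ u ^ 2 * (exp U - U - 1) := by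
          gcongr; linarith [quadratic_le_exp_of_nonneg hU]

lemma exp_mul_le_of_le {x M t : ℝ} (hM : 0 < M) (ht : 0 ≤ t) (hx : x ≤ M) :
    exp (t * x) ≤ 1 + t * x + x ^ 2 * ((exp (t * M) - t * M - 1) / M ^ 2) := by
  rcases ht.eq_or_lt with rfl | ht
  · simp
  have h := sq_mul_exp_sub_sub_one_le (by positivity : 0 ≤ t * M) (by gcongr : t * x ≤ t * M)
  rw [mul_pow, mul_pow, mul_assoc, mul_assoc] at h
  have h' := le_of_mul_le_mul_left h (by positivity : 0 < t ^ 2)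
  rw [mul_div_assoc', ← sub_le_iff_le_add', le_div_iff₀ (by positivity)]
  linarith

lemma lipschitzWith_log_one_add_exp : LipschitzWith 1 fun s : ℝ => log (1 + exp s) := by
  refine LipschitzWith.of_le_add fun s t => ?_
  have h : 1 + exp s ≤ exp (dist s t) * (1 + exp t) := by
    have hexp : exp s ≤ exp (dist s t) * exp t := by
      rw [← exp_add, dist_eq]
      exact exp_le_exp.2 (by linarith [le_abs_self (s - t)])
    linarith [one_le_exp (dist_nonneg (x := s) (y := t))]
  calc log (1 + exp s) ≤ log (exp (dist s t) * (1 + exp t)) := log_le_log (by positivity) h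
    _ = log (1 + exp t) + dist s t := by
      rw [log_mul (exp_pos _).ne' (by positivity), log_exp, add_comm]

lemma log_one_add_exp_pos (s : ℝ) : 0 < log (1 + exp s) :=
  log_pos (lt_add_of_pos_right 1 (exp_pos s))

lemma lipschitzWith_log_one_add_exp_neg_mul_add {y : ℝ} (hy : |y| = 1) (b : ℝ) :
    LipschitzWith 1 fun r : ℝ => log (1 + exp (-y * (r + b))) := by
  have : LipschitzWith 1 fun r : ℝ => -y * (r + b) :=
    LipschitzWith.of_dist_le_mul fun r r' => by simp [dist_eq, ← mul_sub, abs_mul, hy]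
  simpa only [mul_one, Function.comp_def] using lipschitzWith_log_one_add_exp.comp this

lemma log_one_add_exp_neg_mul_inner_add_le {E : Type*} [NormedAddCommGroup E]
    [InnerProductSpace ℝ E] {w z : E} {y : ℝ} (hy : |y| = 1) (hz : ‖z‖ = 1) (b : ℝ) :
    log (1 + exp (-y * (⟪w, z⟫ + b))) ≤ log (1 + exp (‖w‖ - y * b)) := by
  have h := abs_real_inner_le_norm w z
  rw [hz, mul_one] at h
  have h' := neg_abs_le (y * ⟪w, z⟫)
  rw [abs_mul, hy, one_mul] at h'
  gcongr
  linarith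

/-- Right-tail sub-gamma condition with variance factor `V` and scale `c`. Integrability is
part of it because `mgf X μ t` is `0` where `exp (t * X)` is not integrable. -/
def HasSubgammaMGF {Ω : Type*} [MeasurableSpace Ω] (X : Ω → ℝ) (V c : ℝ)
    (μ : Measure Ω) : Prop :=
  ∀ t, 0 ≤ t → c * t < 1 →
    Integrable (fun ω => exp (t * X ω)) μ ∧ mgf X μ t ≤ exp (V * t ^ 2 / (2 * (1 - c * t)))

section

variable {Ω : Type*} [MeasurableSpace Ω] {μ : Measure Ω}

lemma hasSubgammaMGF_of_ae_le [IsProbabilityMeasure μ] {Y : Ω → ℝ} {M : ℝ}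
    (hY : MemLp Y 2 μ) (hM : 0 < M) (hle : ∀ᵐ ω ∂μ, Y ω ≤ M) (hmean : μ[Y] = 0) :
    HasSubgammaMGF Y Var[Y; μ] (M / 3) μ := by
  intro t ht htM
  refine ⟨integrable_exp_mul_of_le t M ht hY.aemeasurable hle, ?_⟩
  set q := (exp (t * M) - t * M - 1) / M ^ 2
  have hq : q ≤ t ^ 2 / (2 * (1 - M / 3 * t)) := by
    rw [div_le_iff₀ (by positivity)]
    calc exp (t * M) - t * M - 1 ≤ (t * M) ^ 2 / (2 * (1 - t * M / 3)) :=
          exp_sub_sub_one_le_of_lt_three (by positivity) (by linarith)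
      _ = t ^ 2 / (2 * (1 - M / 3 * t)) * M ^ 2 := by ring
  have hsq : μ[Y ^ 2] = Var[Y; μ] := by rw [variance_eq_sub hY, hmean]; ring
  have hlin : Integrable (fun ω => t * Y ω) μ := (hY.integrable one_le_two).const_mul t
  have hquad : Integrable (fun ω => Y ω ^ 2 * q) μ := hY.integrable_sq.mul_const q
  calc mgf Y μ t ≤ μ[fun ω => 1 + t * Y ω + Y ω ^ 2 * q] := by
        refine integral_mono_ae (integrable_exp_mul_of_le t M ht hY.aemeasurable hle)
          (((integrable_const 1).add hlin).add hquad) ?_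
        filter_upwards [hle] with ω hω using exp_mul_le_of_le hM ht hω
    _ = 1 + Var[Y; μ] * q := by
        have haffine : Integrable (fun ω => 1 + t * Y ω) μ := (integrable_const 1).add hlin
        rw [integral_add haffine hquad,
          integral_add (integrable_const 1) hlin, integral_const_mul, integral_mul_const,
          ← hsq, hmean]
        simp
    _ ≤ exp (Var[Y; μ] * q) := by linarith [add_one_le_exp (Var[Y; μ] * q)]
    _ ≤ exp (Var[Y; μ] * t ^ 2 / (2 * (1 - M / 3 * t))) := by
        rw [mul_div_assoc]
        gcongr
        exact variance_nonneg Y μ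

namespace HasSubgammaMGF

lemma mono {X : Ω → ℝ} {V V' c : ℝ} (h : HasSubgammaMGF X V c μ) (hV : V ≤ V') :
    HasSubgammaMGF X V' c μ := by
  intro t ht hct
  refine ⟨(h t ht hct).1, (h t ht hct).2.trans (exp_le_exp.2 ?_)⟩
  have : 0 < 1 - c * t := by linarith
  gcongr

lemma sum {ι : Type*} [IsFiniteMeasure μ] {X : ι → Ω → ℝ} {V : ι → ℝ} {c : ℝ}
    (hindep : iIndepFun X μ) (hmeas : ∀ i, Measurable (X i)) (s : Finset ι)
    (h : ∀ i ∈ s, HasSubgammaMGF (X i) (V i) c μ) :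
    HasSubgammaMGF (∑ i ∈ s, X i) (∑ i ∈ s, V i) c μ := by
  intro t ht hct
  refine ⟨hindep.integrable_exp_mul_sum hmeas fun i hi => (h i hi t ht hct).1, ?_⟩
  rw [hindep.mgf_sum hmeas, Finset.sum_mul, Finset.sum_div, exp_sum]
  exact Finset.prod_le_prod (fun i _ => mgf_nonneg) fun i hi => (h i hi t ht hct).2

lemma measureReal_ge_le [IsFiniteMeasure μ] {X : Ω → ℝ} {V c L : ℝ}
    (h : HasSubgammaMGF X V c μ) (hc : 0 < c) (hL : 0 ≤ L) :
    μ.real {ω | √(2 * V * L) + c * L ≤ X ω} ≤ exp (-L) := by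
  have chernoff (ε t : ℝ) (ht : 0 ≤ t) (hct : c * t < 1) :
      μ.real {ω | ε ≤ X ω} ≤ exp (-t * ε + V * t ^ 2 / (2 * (1 - c * t))) := by
    rw [exp_add]
    exact (measure_ge_le_exp_mul_mgf ε ht (h t ht hct).1).trans
      (by gcongr; exact (h t ht hct).2)
  rcases le_or_gt V 0 with hV | hV
  · -- the Chernoff exponent tends to `-L` as `t` tends to the excluded endpoint `1 / c`
    rw [sqrt_eq_zero'.2 (by nlinarith), zero_add]
    have hlim : Tendsto (fun t => exp (-t * (c * L))) (𝓝[<] (1 / c)) (𝓝 (exp (-L))) := by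
      have : Continuous fun t => exp (-t * (c * L)) := by fun_prop
      convert this.continuousAt.tendsto.mono_left nhdsWithin_le_nhds using 2
      field_simp
    refine ge_of_tendsto hlim ?_
    filter_upwards [Ioo_mem_nhdsLT (one_div_pos.2 hc)] with t ⟨ht, htc⟩
    have hct : c * t < 1 := (lt_div_iff₀' hc).1 htc
    refine (chernoff _ t ht.le hct).trans (exp_le_exp.2 ?_)
    have : V * t ^ 2 / (2 * (1 - c * t)) ≤ 0 :=
      div_nonpos_of_nonpos_of_nonneg (by nlinarith) (by linarith)
    linarith
  · -- at `t = s / (V + c s)` the Chernoff exponent is exactly `-L`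
    set s := √(2 * V * L)
    have hs : s ^ 2 = 2 * V * L := sq_sqrt (by positivity)
    have hden : 0 < V + c * s := by positivity
    have hct : c * (s / (V + c * s)) < 1 := by
      rw [mul_div_assoc', div_lt_one hden]; linarith
    refine (chernoff _ (s / (V + c * s)) (by positivity) hct).trans (le_of_eq (congrArg exp ?_))
    have : 1 - c * (s / (V + c * s)) = V / (V + c * s) := by field_simp; ring
    rw [this]
    field_simp
    rw [div_eq_iff (by linarith)]
    linear_combination (-1) * hs

end HasSubgammaMGF

lemma LipschitzWith.variance_comp_le [IsProbabilityMeasure μ] {X : Ω → ℝ} {g : ℝ → ℝ}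
    {K : ℝ≥0} (hg : LipschitzWith K g) (hX : MemLp X 2 μ) :
    Var[fun ω => g (X ω); μ] ≤ K ^ 2 * Var[X; μ] := by
  have hgX : AEStronglyMeasurable (fun ω => g (X ω)) μ :=
    hg.continuous.comp_aestronglyMeasurable hX.1
  rw [← variance_sub_const hgX (g μ[X]), variance_eq_integral hX.aemeasurable,
    ← integral_const_mul]
  refine (variance_le_expectation_sq (hgX.sub aestronglyMeasurable_const)).trans
    (integral_mono_of_nonneg (ae_of_all _ fun ω => sq_nonneg _)
      ((hX.sub (memLp_const _)).integrable_sq.const_mul _) (ae_of_all _ fun ω => ?_))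
  calc (g (X ω) - g μ[X]) ^ 2 = dist (g (X ω)) (g μ[X]) ^ 2 := by rw [dist_eq, sq_abs]
    _ ≤ (K * dist (X ω) μ[X]) ^ 2 := by gcongr; exact hg.dist_le_mul _ _
    _ = K ^ 2 * (X ω - μ[X]) ^ 2 := by rw [mul_pow, dist_eq, sq_abs]

lemma variance_inner_eq_integral {E : Type*} [NormedAddCommGroup E] [InnerProductSpace ℝ E]
    [CompleteSpace E] {Z : Ω → E} (hZ : Integrable Z μ) (w : E) :
    Var[fun ω => ⟪w, Z ω⟫; μ] = ∫ ω, ⟪w, Z ω - ∫ ω', Z ω' ∂μ⟫ ^ 2 ∂μ := by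
  rw [variance_eq_integral (aestronglyMeasurable_const.inner hZ.1).aemeasurable,
    integral_inner hZ w]
  simp_rw [inner_sub_right]

lemma ofReal_one_sub_le_measure_compl [IsProbabilityMeasure μ] {s : Set Ω} {q : ℝ}
    (h : μ.real s ≤ q) : ENNReal.ofReal (1 - q) ≤ μ sᶜ := by
  have hunion : 1 ≤ μ.real s + μ.real sᶜ := by
    simpa [Set.union_compl_self] using measureReal_union_le (μ := μ) s sᶜ
  rw [ENNReal.ofReal_le_iff_le_toReal (measure_ne_top μ _)]
  exact (show 1 - q ≤ μ.real sᶜ by linarith)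

theorem measureReal_integral_sub_average_gt_le [IsProbabilityMeasure μ] {X : ℕ → Ω → ℝ}
    {M v L : ℝ} {N : ℕ} (hindep : iIndepFun X μ) (hmeas : ∀ i, Measurable (X i))
    (hident : ∀ i, IdentDistrib (X i) (X 0) μ μ) (hbd : ∀ i ω, X i ω ∈ Set.Icc 0 M)
    (hvar : Var[X 0; μ] ≤ v) (hM : 0 < M) (hL : 0 ≤ L) (hN : 0 < N) :
    μ.real {ω | √(2 / N * v * L) + L / (3 * N) * M <
      μ[X 0] - (N : ℝ)⁻¹ * ∑ i ∈ Finset.range N, X (i + 1) ω} ≤ exp (-L) := by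
  set m := μ[X 0]
  have hmemLp (i : ℕ) : MemLp (X i) 2 μ :=
    memLp_of_bounded (ae_of_all _ (hbd i)) (hmeas i).aestronglyMeasurable 2
  have hm : m ≤ M := by
    simpa using integral_mono ((hmemLp 0).integrable one_le_two) (integrable_const M)
      fun ω => (hbd 0 ω).2
  set Y : ℕ → Ω → ℝ := fun i ω => m - X (i + 1) ω
  have hY (i : ℕ) : HasSubgammaMGF (Y i) v (M / 3) μ := by
    refine (hasSubgammaMGF_of_ae_le (show MemLp (Y i) 2 μ from
      (memLp_const m).sub (hmemLp (i + 1))) hM (ae_of_all _ fun ω => ?_) ?_).mono ?_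
    · linarith [(hbd (i + 1) ω).1]
    · rw [integral_sub (integrable_const m) ((hmemLp (i + 1)).integrable one_le_two),
        (hident (i + 1)).integral_eq]
      simp [m]
    · rw [variance_const_sub (hmemLp (i + 1)).1, (hident (i + 1)).variance_eq]
      exact hvar
  have hYindep : iIndepFun Y μ :=
    (hindep.precomp (add_left_injective 1)).comp (fun _ x => m - x) fun _ => by fun_prop
  refine (measureReal_mono fun ω hω => ?_).trans ((HasSubgammaMGF.sum hYindep
    (fun i => by fun_prop) (Finset.range N) fun i _ => hY i).measureReal_ge_le (by positivity) hL)
  simp only [Set.mem_ofPred_eq, Finset.sum_apply, Finset.sum_sub_distrib, Finset.sum_const,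
    Finset.card_range, nsmul_eq_mul, Y] at hω ⊢
  have hN' : (0 : ℝ) < N := by exact_mod_cast hN
  have hsqrt : √(2 * (N * v) * L) = N * √(2 / N * v * L) := by
    rw [show 2 * (N * v) * L = (N : ℝ) ^ 2 * (2 / N * v * L) by field_simp,
      sqrt_mul (by positivity), sqrt_sq hN'.le]
  calc √(2 * (N * v) * L) + M / 3 * L = N * (√(2 / N * v * L) + L / (3 * N) * M) := by
        rw [hsqrt]; field_simp
    _ ≤ N * (m - (N : ℝ)⁻¹ * ∑ i ∈ Finset.range N, X (i + 1) ω) := by gcongr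
    _ = N * m - ∑ i ∈ Finset.range N, X (i + 1) ω := by field_simp

end

theorem stmt_9_general (p : ℕ) (w : EuclideanSpace ℝ (Fin p)) (b : ℝ)
    (y : ℝ) (hy : y = -1 ∨ y = 1) (δ : ℝ) (hδ : δ ∈ Set.Ioo (0 : ℝ) 1)
    {Ω : Type*} [MeasurableSpace Ω] (μ : Measure Ω) [IsProbabilityMeasure μ]
    (N : ℕ) (hN : 0 < N)
    (Z : ℕ → Ω → EuclideanSpace ℝ (Fin p)) (hmeas : ∀ i, Measurable (Z i))
    (hindep : iIndepFun Z μ)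
    (hident : ∀ i, Measure.map (Z i) μ = Measure.map (Z 0) μ)
    (hsphere : ∀ i ω, ‖Z i ω‖ = 1) :
    ENNReal.ofReal (1 - δ / 2) ≤
      μ {ω | (∫ ω', Real.log (1 + Real.exp (-y * (⟪w, Z 0 ω'⟫ + b))) ∂μ) -
          (N : ℝ)⁻¹ * ∑ i ∈ Finset.range N,
            Real.log (1 + Real.exp (-y * (⟪w, Z (i + 1) ω⟫ + b))) ≤
        Real.sqrt ((2 / N) *
            (∫ ω', ⟪w, Z 0 ω' - ∫ ω'', Z 0 ω'' ∂μ⟫ ^ 2 ∂μ) * Real.log (2 / δ)) +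
          (Real.log (2 / δ) / (3 * N)) *
            Real.log (1 + Real.exp (‖w‖ - y * b))} := by
  obtain ⟨hδ0, hδ1⟩ := hδ
  have hy1 : |y| = 1 := by rcases hy with rfl | rfl <;> simp
  set ℓ : EuclideanSpace ℝ (Fin p) → ℝ := fun z => log (1 + exp (-y * (⟪w, z⟫ + b)))
  have hℓ_lip := lipschitzWith_log_one_add_exp_neg_mul_add hy1 b
  have hℓ_meas : Measurable ℓ :=
    hℓ_lip.continuous.measurable.comp (continuous_const.inner continuous_id).measurable
  have hZ : MemLp (Z 0) 2 μ :=
    MemLp.of_bound (hmeas 0).aestronglyMeasurable 1 (ae_of_all _ fun ω => (hsphere 0 ω).le)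
  have hvar := hℓ_lip.variance_comp_le (hZ.const_inner w)
  rw [NNReal.coe_one, one_pow, one_mul, variance_inner_eq_integral (hZ.integrable one_le_two)]
    at hvar
  have hdev := measureReal_integral_sub_average_gt_le (X := fun i ω => ℓ (Z i ω))
    (L := log (2 / δ))
    (hindep.comp (fun _ => ℓ) fun _ => hℓ_meas) (fun i => hℓ_meas.comp (hmeas i))
    (fun i => (IdentDistrib.mk (hmeas i).aemeasurable (hmeas 0).aemeasurable (hident i)).comp
      hℓ_meas)
    (fun i ω => ⟨(log_one_add_exp_pos _).le,
      log_one_add_exp_neg_mul_inner_add_le hy1 (hsphere i ω) b⟩)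
    hvar (log_one_add_exp_pos _) (log_nonneg ((one_le_div hδ0).2 (by linarith))) hN
  have hexp : exp (-log (2 / δ)) = δ / 2 := by rw [exp_neg, exp_log (by positivity), inv_div]
  rw [hexp] at hdev
  simpa only [Set.compl_ofPred, not_lt] using ofReal_one_sub_le_measure_compl hdev

theorem stmt_9 (p : ℕ) (hp : 1 ≤ p) (w : EuclideanSpace ℝ (Fin p)) (b : ℝ)
    (y : ℝ) (hy : y = -1 ∨ y = 1) (δ : ℝ) (hδ : δ ∈ Set.Ioo (0 : ℝ) 1)
    {Ω : Type*} [MeasurableSpace Ω] (μ : Measure Ω) [IsProbabilityMeasure μ]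
    (N : ℕ) (hN : 0 < N)
    (Z : ℕ → Ω → EuclideanSpace ℝ (Fin p)) (hmeas : ∀ i, Measurable (Z i))
    (hindep : iIndepFun Z μ)
    (hident : ∀ i, Measure.map (Z i) μ = Measure.map (Z 0) μ)
    (hsphere : ∀ i ω, ‖Z i ω‖ = 1) :
    ENNReal.ofReal (1 - δ / 2) ≤
      μ {ω | (∫ ω', Real.log (1 + Real.exp (-y * (⟪w, Z 0 ω'⟫ + b))) ∂μ) -
          (N : ℝ)⁻¹ * ∑ i ∈ Finset.range N,
            Real.log (1 + Real.exp (-y * (⟪w, Z (i + 1) ω⟫ + b))) ≤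
        Real.sqrt ((2 / N) *
            (∫ ω', ⟪w, Z 0 ω' - ∫ ω'', Z 0 ω'' ∂μ⟫ ^ 2 ∂μ) * Real.log (2 / δ)) +
          (Real.log (2 / δ) / (3 * N)) *
            Real.log (1 + Real.exp (‖w‖ - y * b))} :=
  stmt_9_general p w b y hy δ hδ μ N hN Z hmeas hindep hident hsphere
end

section
/- Let p ≥ 1, w ∈ ℝ^p, b ∈ ℝ, and δ ∈ (0, 1). Let P(+1), P(−1) ≥ 0 with P(+1) + P(−1) = 1, and for each y ∈ {-1, 1} let Z^{(y)}, Z^{(y)}_1, …, Z^{(y)}_{N_y} be i.i.d. random vectors taking values in the unit sphere S^{p-1} of ℝ^p, with the two families independent. Define L_log(y, z) = log(1 + exp(-y(⟨w, z⟩ + b))). Then with probability at least 1 − δ, Σ_{y ∈ {-1,1}} P(y) · E[L_log(y, Z^{(y)})] ≤ Σ_{y ∈ {-1,1}} (P(y)/N_y) Σ_{i=1}^{N_y} L_log(y, Z^{(y)}_i) + Σ_{y ∈ {-1,1}} P(y) · (ln(2/δ)/(3N_y)) · log(1 + exp(‖w‖₂ − y·b)) + Σ_{y ∈ {-1,1}}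 P(y) · sqrt( (2/N_y) · E[⟨w, Z^{(y)} − E[Z^{(y)}]⟩²] · ln(2/δ) ). -/
/-!
For each class `y`, the losses `L_log(y, Z_i)` are i.i.d. and take values in
`[0, log (1 + exp (‖w‖ - y b))]` because `‖Z_i‖ = 1`; since the softplus `x ↦ log (1 + exp x)`
is 1-Lipschitz, their variance is at most that of `⟨w, Z⟩`. Bernstein's inequality (Chernoff's
bound with the mgf estimate `E exp (a Y) ≤ exp (a² E Y² / (2 (1 - a c / 3)))` for `|Y| ≤ c`) at
level `t = log (2 / δ)` bounds the probability that the class risk exceeds its empirical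
estimate by more than the stated terms by `δ / 2`; a union bound over the two classes concludes.
-/

open scoped RealInnerProductSpace
open MeasureTheory ProbabilityTheory

namespace Real

noncomputable def softplus (x : ℝ) : ℝ := log (1 + exp x)

lemma softplus_nonneg (x : ℝ) : 0 ≤ softplus x :=
  log_nonneg (by linarith [exp_pos x])

lemma softplus_mono : Monotone softplus := fun _ _ h =>
  log_le_log (by positivity) (by linarith [exp_le_exp.2 h])

lemma softplus_add_le {x d : ℝ} (hd : 0 ≤ d) : softplus (x + d) ≤ softplus x + d := by
  have h : 1 + exp (x + d) ≤ exp d * (1 + exp x) := by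
    rw [exp_add]; nlinarith [one_le_exp hd, exp_pos x]
  calc softplus (x + d) ≤ log (exp d * (1 + exp x)) := log_le_log (by positivity) h
    _ = softplus x + d := by
      rw [log_mul (exp_pos d).ne' (add_pos one_pos (exp_pos x)).ne', log_exp, softplus,
        add_comm]

lemma continuous_softplus : Continuous softplus :=
  (continuous_const.add continuous_exp).log fun x => (add_pos one_pos (exp_pos x)).ne'

lemma lipschitzWith_softplus : LipschitzWith 1 softplus :=
  LipschitzWith.of_le_add fun x y => calc
    softplus x ≤ softplus (y + dist x y) := softplus_mono (show x ≤ y + dist x y by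
      rw [dist_eq]; linarith [le_abs_self (x - y)])
    _ ≤ softplus y + dist x y := softplus_add_le dist_nonneg

lemma lipschitzWith_softplus_neg_mul_add {y : ℝ} (hy : |y| = 1) (b : ℝ) :
    LipschitzWith 1 fun g => softplus (-y * (g + b)) :=
  LipschitzWith.of_dist_le_mul fun g g' => by
    refine (lipschitzWith_softplus.dist_le_mul _ _).trans_eq ?_
    rw [dist_eq, dist_eq, ← mul_sub, abs_mul, abs_neg, hy]
    ring_nf

lemma exp_le_one_add_add_sq_div {x c : ℝ} (hx : |x| ≤ c) (hc : c < 3) :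
    exp x ≤ 1 + x + x ^ 2 / (2 * (1 - c / 3)) := by
  -- the exponential tail is dominated by a geometric series, as `(n + 2)! ≥ 2 * 3 ^ n`
  have hc0 : 0 ≤ c / 3 := by linarith [abs_nonneg x]
  have hexp : HasSum (fun n => x ^ n / n.factorial) (exp x) := by
    rw [exp_eq_exp_ℝ]; exact NormedSpace.expSeries_div_hasSum_exp x
  have htail := (hasSum_nat_add_iff' 2).2 hexp
  have hgeom := (hasSum_geometric_of_lt_one hc0 (by linarith)).mul_left (x ^ 2 / 2)
  have hterm (n : ℕ) : x ^ (n + 2) / (n + 2).factorial ≤ x ^ 2 / 2 * (c / 3) ^ n := by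
    have hfact : (2 * 3 ^ n : ℝ) ≤ (n + 2).factorial := by
      exact_mod_cast (add_comm n 2 ▸ Nat.factorial_mul_pow_le_factorial (m := 2) (n := n))
    calc x ^ (n + 2) / (n + 2).factorial ≤ x ^ 2 * c ^ n / (2 * 3 ^ n) := by
          refine div_le_div₀ (mul_nonneg (sq_nonneg x) (pow_nonneg (by linarith) n)) ?_
            (by positivity) hfact
          calc x ^ (n + 2) ≤ |x| ^ (n + 2) := (le_abs_self _).trans (abs_pow x _).le
            _ = x ^ 2 * |x| ^ n := by rw [pow_add, sq_abs, mul_comm]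
            _ ≤ x ^ 2 * c ^ n := by gcongr
      _ = x ^ 2 / 2 * (c / 3) ^ n := by rw [div_pow]; ring
  have htail_le := hasSum_le hterm htail hgeom
  simp only [Finset.sum_range_succ, Finset.sum_range_zero] at htail_le
  rw [mul_comm 2, ← div_div, div_eq_mul_inv _ (1 - c / 3)]
  norm_num at htail_le
  linarith

end Real

open Real Finset

namespace ProbabilityTheory

variable {Ω : Type*} [MeasurableSpace Ω] {μ : Measure Ω} [IsProbabilityMeasure μ]

lemma mgf_le_exp_of_abs_le {Y : Ω → ℝ} (hY : AEMeasurable Y μ) {c a : ℝ}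
    (hb : ∀ ω, |Y ω| ≤ c) (hmean : μ[Y] = 0) (ha : 0 ≤ a) (hac : a * c < 3) :
    mgf Y μ a ≤ exp (a ^ 2 * μ[Y ^ 2] / (2 * (1 - a * c / 3))) := by
  set D := 2 * (1 - a * c / 3)
  have hYint : Integrable Y μ := .of_bound hY.aestronglyMeasurable c (ae_of_all _ hb)
  have hY2int : Integrable (Y ^ 2) μ := .of_bound (hY.pow_const 2).aestronglyMeasurable (c ^ 2)
    (ae_of_all _ fun ω => by
      simpa [Real.norm_eq_abs, sq_abs] using pow_le_pow_left₀ (abs_nonneg _) (hb ω) 2)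
  have hexp_int : Integrable (fun ω => exp (a * Y ω)) μ :=
    .of_bound (by fun_prop : AEMeasurable (fun ω => exp (a * Y ω)) μ).aestronglyMeasurable
      (exp (a * c)) (ae_of_all _ fun ω => by
        rw [Real.norm_eq_abs, abs_exp]
        exact exp_le_exp.2 (mul_le_mul_of_nonneg_left ((le_abs_self _).trans (hb ω)) ha))
  have hpoint (ω : Ω) : exp (a * Y ω) ≤ 1 + a * Y ω + a ^ 2 / D * (Y ^ 2) ω := by
    have h := exp_le_one_add_add_sq_div (x := a * Y ω) (c := a * c)
      (by rw [abs_mul, abs_of_nonneg ha]; exact mul_le_mul_of_nonneg_left (hb ω) ha) hac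
    simp only [Pi.pow_apply]
    convert h using 2; ring
  have hlin : Integrable (fun ω => 1 + a * Y ω) μ := (integrable_const 1).add (hYint.const_mul a)
  calc mgf Y μ a ≤ ∫ ω, (1 + a * Y ω + a ^ 2 / D * (Y ^ 2) ω) ∂μ :=
        integral_mono hexp_int (hlin.add (hY2int.const_mul _)) hpoint
    _ = 1 + a ^ 2 * μ[Y ^ 2] / D := by
        rw [integral_add hlin (hY2int.const_mul _),
          integral_add (integrable_const 1) (hYint.const_mul a), integral_const_mul,
          integral_const_mul, hmean]
        simp only [integral_const, probReal_univ, smul_eq_mul]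
        ring
    _ ≤ exp (a ^ 2 * μ[Y ^ 2] / D) := by linarith [add_one_le_exp (a ^ 2 * μ[Y ^ 2] / D)]

theorem bernstein_measure_sum_ge_le {ι : Type*} {Y : ι → Ω → ℝ} (hmeas : ∀ i, Measurable (Y i))
    (hindep : iIndepFun Y μ) {s : Finset ι} {c V t : ℝ} (hc : 0 ≤ c)
    (hb : ∀ i ∈ s, ∀ ω, |Y i ω| ≤ c) (hmean : ∀ i ∈ s, μ[Y i] = 0)
    (hV : 0 < V) (hvar : ∑ i ∈ s, μ[Y i ^ 2] ≤ V) (ht : 0 ≤ t) :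
    μ {ω | √(2 * V * t) + c * t / 3 ≤ ∑ i ∈ s, Y i ω} ≤ ENNReal.ofReal (exp (-t)) := by
  set r := √(2 * V * t)
  have hr : r ^ 2 = 2 * V * t := sq_sqrt (by positivity)
  have hr0 : 0 ≤ r := sqrt_nonneg _
  set D := V + r * c / 3 with hD_def
  have hD : 0 < D := by positivity
  -- the minimiser of the Chernoff exponent, in closed form
  set a := r / D with ha_def
  have ha : 0 ≤ a := by positivity
  clear_value r D a
  have hac : a * c < 3 := by
    rw [ha_def, div_mul_eq_mul_div, div_lt_iff₀ hD, hD_def]; linarith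
  have hden : 2 * (1 - a * c / 3) = 2 * V / D := by
    rw [ha_def]; field_simp; rw [hD_def]; ring
  have hexponent : -a * (r + c * t / 3) + a ^ 2 * V / (2 * (1 - a * c / 3)) = -t := by
    rw [hden, ha_def]; field_simp; rw [hD_def]; linear_combination (-3) * hr
  have hS_int : Integrable (fun ω => exp (a * (∑ i ∈ s, Y i) ω)) μ := by
    refine .of_bound (by fun_prop) (exp (a * ∑ i ∈ s, c)) (ae_of_all _ fun ω => ?_)
    rw [Real.norm_eq_abs, abs_exp, Finset.sum_apply]
    gcongr with i hi
    exact (le_abs_self _).trans (hb i hi ω)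
  have hmgf : mgf (∑ i ∈ s, Y i) μ a ≤ exp (a ^ 2 * V / (2 * (1 - a * c / 3))) := by
    rw [hindep.mgf_sum hmeas]
    calc ∏ i ∈ s, mgf (Y i) μ a
        ≤ ∏ i ∈ s, exp (a ^ 2 * μ[Y i ^ 2] / (2 * (1 - a * c / 3))) :=
          Finset.prod_le_prod (fun _ _ => mgf_nonneg) fun i hi =>
            mgf_le_exp_of_abs_le (hmeas i).aemeasurable (hb i hi) (hmean i hi) ha hac
      _ = exp (a ^ 2 * (∑ i ∈ s, μ[Y i ^ 2]) / (2 * (1 - a * c / 3))) := by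
          rw [← exp_sum, Finset.mul_sum, Finset.sum_div]
      _ ≤ exp (a ^ 2 * V / (2 * (1 - a * c / 3))) := by
          gcongr
          linarith
  rw [ENNReal.le_ofReal_iff_toReal_le (measure_ne_top _ _) (exp_pos _).le, ← measureReal_def]
  calc μ.real {ω | r + c * t / 3 ≤ ∑ i ∈ s, Y i ω}
      = μ.real {ω | r + c * t / 3 ≤ (∑ i ∈ s, Y i) ω} := by simp only [Finset.sum_apply]
    _ ≤ exp (-a * (r + c * t / 3)) * mgf (∑ i ∈ s, Y i) μ a :=
        measure_ge_le_exp_mul_mgf _ ha hS_int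
    _ ≤ exp (-a * (r + c * t / 3)) * exp (a ^ 2 * V / (2 * (1 - a * c / 3))) := by gcongr
    _ = exp (-t) := by rw [← exp_add, hexponent]

theorem bernstein_measure_sum_gt_le {ι : Type*} {Y : ι → Ω → ℝ} (hmeas : ∀ i, Measurable (Y i))
    (hindep : iIndepFun Y μ) {s : Finset ι} {c V t : ℝ} (hc : 0 ≤ c)
    (hb : ∀ i ∈ s, ∀ ω, |Y i ω| ≤ c) (hmean : ∀ i ∈ s, μ[Y i] = 0)
    (hvar : ∑ i ∈ s, μ[Y i ^ 2] ≤ V) (ht : 0 ≤ t) :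
    μ {ω | √(2 * V * t) + c * t / 3 < ∑ i ∈ s, Y i ω} ≤ ENNReal.ofReal (exp (-t)) := by
  have hV : 0 ≤ V :=
    (Finset.sum_nonneg fun i _ => integral_nonneg fun ω => sq_nonneg (Y i ω)).trans hvar
  -- approximate `V` from above by `V + 1 / (n + 1)`, for which the non-strict bound holds
  set threshold : ℝ → ℝ := fun V' => √(2 * V' * t) + c * t / 3
  set A : ℕ → Set Ω := fun n => {ω | threshold (V + 1 / (n + 1)) ≤ ∑ i ∈ s, Y i ω}
  have hthreshold : Monotone threshold := fun V₁ V₂ h => by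
    simp only [threshold]; gcongr
  have hA : Monotone A := fun n m hnm ω hω =>
    (hthreshold (by gcongr)).trans hω
  have hlim : Filter.Tendsto (fun n : ℕ => threshold (V + 1 / (n + 1))) Filter.atTop
      (nhds (threshold V)) := by
    have hcont : Continuous threshold := by fun_prop
    have h := tendsto_one_div_add_atTop_nhds_zero_nat.const_add V
    rw [add_zero] at h
    exact (hcont.tendsto V).comp h
  have hsub : {ω | threshold V < ∑ i ∈ s, Y i ω} ⊆ ⋃ n, A n := fun ω hω =>
    Set.mem_iUnion.2 ((hlim.eventually (eventually_le_nhds hω)).exists)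
  calc μ {ω | threshold V < ∑ i ∈ s, Y i ω} ≤ μ (⋃ n, A n) := measure_mono hsub
    _ = ⨆ n, μ (A n) := hA.measure_iUnion
    _ ≤ ENNReal.ofReal (exp (-t)) := iSup_le fun n =>
      bernstein_measure_sum_ge_le hmeas hindep hc hb hmean (by positivity)
        (hvar.trans (le_add_of_nonneg_right (by positivity))) ht

theorem bernstein_measure_average_lt_le {ι : Type*} {X : ι → Ω → ℝ}
    (hmeas : ∀ i, Measurable (X i)) (hindep : iIndepFun X μ) {s : Finset ι} (hs : s.Nonempty)
    {m c v t : ℝ} (hmean : ∀ i ∈ s, μ[X i] = m) (hb : ∀ i ∈ s, ∀ ω, |X i ω - m| ≤ c)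
    (hvar : ∀ i ∈ s, Var[X i; μ] ≤ v) (ht : 0 ≤ t) :
    μ {ω | (#s : ℝ)⁻¹ * ∑ i ∈ s, X i ω + t / (3 * #s) * c + √(2 / #s * v * t) < m} ≤
      ENNReal.ofReal (exp (-t)) := by
  have hN : (0 : ℝ) < #s := by exact_mod_cast hs.card_pos
  have hc : 0 ≤ c := by
    obtain ⟨i, hi⟩ := hs
    obtain ⟨ω⟩ := nonempty_of_isProbabilityMeasure μ
    exact (abs_nonneg _).trans (hb i hi ω)
  have hint : ∀ i ∈ s, Integrable (X i) μ := fun i hi =>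
    .of_bound (hmeas i).aestronglyMeasurable (|m| + c) (ae_of_all _ fun ω => by
      rw [Real.norm_eq_abs]
      linarith [abs_sub_abs_le_abs_sub (X i ω) m, hb i hi ω])
  have hdev : ∀ i ∈ s, μ[(fun ω => m - X i ω) ^ 2] = Var[X i; μ] := fun i hi => by
    rw [variance_eq_integral (hmeas i).aemeasurable, hmean i hi]
    exact integral_congr_ae (ae_of_all _ fun ω => by simp only [Pi.pow_apply]; ring)
  have hbound := bernstein_measure_sum_gt_le (Y := fun i ω => m - X i ω) (s := s) (V := #s * v)
    (fun i => measurable_const.sub (hmeas i))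
    (hindep.comp (fun _ x => m - x) fun _ => measurable_const.sub measurable_id) hc
    (fun i hi ω => by rw [abs_sub_comm]; exact hb i hi ω)
    (fun i hi => by rw [integral_sub (integrable_const m) (hint i hi), hmean i hi]; simp)
    (by
      rw [Finset.sum_congr rfl hdev]
      simpa using Finset.sum_le_sum hvar)
    ht
  refine le_trans (measure_mono fun ω hω => ?_) hbound
  simp only [Set.mem_ofPred_eq] at hω ⊢
  have hsqrt : √(2 * (#s * v) * t) = #s * √(2 / #s * v * t) := by
    rw [show 2 * (#s * v) * t = (#s : ℝ) ^ 2 * (2 / #s * v * t) by field_simp,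
      sqrt_mul (sq_nonneg _), sqrt_sq hN.le]
  have hscaled : ∑ i ∈ s, X i ω + c * t / 3 + #s * √(2 / #s * v * t) < #s * m :=
    calc _ = (#s : ℝ) * ((#s : ℝ)⁻¹ * ∑ i ∈ s, X i ω + t / (3 * #s) * c
            + √(2 / #s * v * t)) := by field_simp
      _ < #s * m := mul_lt_mul_of_pos_left hω hN
  rw [Finset.sum_sub_distrib, Finset.sum_const, nsmul_eq_mul, hsqrt]
  linarith

lemma variance_comp_le_of_lipschitzWith {f : ℝ → ℝ} {K : NNReal} (hf : LipschitzWith K f)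
    {X : Ω → ℝ} (hX : MemLp X 2 μ) :
    Var[fun ω => f (X ω); μ] ≤ K ^ 2 * Var[X; μ] := by
  set m := μ[X]
  have hfX : AEStronglyMeasurable (fun ω => f (X ω)) μ :=
    hf.continuous.comp_aestronglyMeasurable hX.1
  have hpoint (x : ℝ) : (f x - f m) ^ 2 ≤ K ^ 2 * (x - m) ^ 2 := by
    have := hf.dist_le_mul x m
    rw [dist_eq, dist_eq] at this
    rw [← sq_abs, ← sq_abs (x - m), ← mul_pow]
    exact pow_le_pow_left₀ (abs_nonneg _) this 2
  calc Var[fun ω => f (X ω); μ] = Var[fun ω => f (X ω) - f m; μ] :=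
        (variance_sub_const hfX _).symm
    _ ≤ ∫ ω, (f (X ω) - f m) ^ 2 ∂μ :=
        variance_le_expectation_sq (hfX.sub aestronglyMeasurable_const)
    _ ≤ ∫ ω, K ^ 2 * (X ω - m) ^ 2 ∂μ :=
        integral_mono_of_nonneg (ae_of_all _ fun ω => sq_nonneg _)
          ((hX.sub (memLp_const m)).integrable_sq.const_mul _)
          (ae_of_all _ fun ω => hpoint (X ω))
    _ = K ^ 2 * Var[X; μ] := by
        rw [integral_const_mul, variance_eq_integral hX.1.aemeasurable]

end ProbabilityTheory

section Logistic

variable {E : Type*} [NormedAddCommGroup E] [InnerProductSpace ℝ E]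

noncomputable def logisticLoss (w : E) (b y : ℝ) (z : E) : ℝ := softplus (-y * (⟪w, z⟫ + b))

lemma logisticLoss_le (w : E) (b : ℝ) {y : ℝ} (hy : |y| = 1) {z : E} (hz : ‖z‖ ≤ 1) :
    logisticLoss w b y z ≤ softplus (‖w‖ - y * b) := by
  refine softplus_mono ?_
  have hinner : |⟪w, z⟫| ≤ ‖w‖ :=
    (abs_real_inner_le_norm w z).trans (mul_le_of_le_one_right (norm_nonneg w) hz)
  have hy_inner : -(y * ⟪w, z⟫) ≤ |⟪w, z⟫| := by
    simpa only [abs_mul, hy, one_mul] using neg_le_abs (y * ⟪w, z⟫)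
  linarith

theorem measure_logisticLoss_bernstein_lt_le {Ω : Type*} [MeasurableSpace Ω] {μ : Measure Ω}
    [IsProbabilityMeasure μ] [CompleteSpace E] [MeasurableSpace E] [BorelSpace E]
    [SecondCountableTopology E] (w : E) (b : ℝ) {y : ℝ} (hy : |y| = 1) {Z : ℕ → Ω → E}
    (hmeas : ∀ i, Measurable (Z i)) (hindep : iIndepFun (fun i => Z (i + 1)) μ)
    (hident : ∀ i, μ.map (Z i) = μ.map (Z 0)) (hnorm : ∀ i ω, ‖Z i ω‖ ≤ 1)
    {N : ℕ} (hN : 0 < N) {t : ℝ} (ht : 0 ≤ t) :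
    μ {ω | (N : ℝ)⁻¹ * ∑ i ∈ range N, logisticLoss w b y (Z (i + 1) ω)
        + t / (3 * N) * softplus (‖w‖ - y * b)
        + √(2 / N * (∫ ω', ⟪w, Z 0 ω' - ∫ ω'', Z 0 ω'' ∂μ⟫ ^ 2 ∂μ) * t)
        < ∫ ω', logisticLoss w b y (Z 0 ω') ∂μ} ≤ ENNReal.ofReal (exp (-t)) := by
  have hloss : Measurable (logisticLoss w b y) :=
    (continuous_softplus.comp (by fun_prop)).measurable
  have hident' (i : ℕ) : IdentDistrib (Z i) (Z 0) μ μ :=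
    ⟨(hmeas i).aemeasurable, (hmeas 0).aemeasurable, hident i⟩
  set M := softplus (‖w‖ - y * b)
  set m := ∫ ω, logisticLoss w b y (Z 0 ω) ∂μ
  have hloss_bounds (i : ℕ) (ω : Ω) :
      0 ≤ logisticLoss w b y (Z i ω) ∧ logisticLoss w b y (Z i ω) ≤ M :=
    ⟨softplus_nonneg _, logisticLoss_le w b hy (hnorm i ω)⟩
  have hm : 0 ≤ m ∧ m ≤ M := by
    refine ⟨integral_nonneg fun ω => (hloss_bounds 0 ω).1, ?_⟩
    calc m ≤ ∫ _, M ∂μ := integral_mono_of_nonneg (ae_of_all _ fun ω => (hloss_bounds 0 ω).1)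
          (integrable_const M) (ae_of_all _ fun ω => (hloss_bounds 0 ω).2)
      _ = M := by simp
  have hZ : Integrable (Z 0) μ :=
    .of_bound (hmeas 0).aestronglyMeasurable 1 (ae_of_all _ (hnorm 0))
  have hinner : MemLp (fun ω => ⟪w, Z 0 ω⟫) 2 μ :=
    .of_bound (by fun_prop) ‖w‖ (ae_of_all _ fun ω =>
      (norm_inner_le_norm w _).trans (mul_le_of_le_one_right (norm_nonneg w) (hnorm 0 ω)))
  have hσ : ∫ ω', ⟪w, Z 0 ω' - ∫ ω'', Z 0 ω'' ∂μ⟫ ^ 2 ∂μ = Var[fun ω => ⟪w, Z 0 ω⟫; μ] := by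
    simp_rw [variance_eq_integral hinner.1.aemeasurable, inner_sub_right, integral_inner hZ]
  have hvar : Var[fun ω => logisticLoss w b y (Z 0 ω); μ] ≤ Var[fun ω => ⟪w, Z 0 ω⟫; μ] := by
    refine (variance_comp_le_of_lipschitzWith (lipschitzWith_softplus_neg_mul_add hy b)
      hinner).trans_eq ?_
    rw [NNReal.coe_one, one_pow, one_mul]
  rw [hσ]
  simpa only [card_range] using
    bernstein_measure_average_lt_le (X := fun i ω => logisticLoss w b y (Z (i + 1) ω))
      (s := range N) (m := m) (c := M) (fun i => hloss.comp (hmeas (i + 1)))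
      (hindep.comp (fun _ => logisticLoss w b y) fun _ => hloss) (nonempty_range_iff.2 hN.ne')
      (fun i _ => ((hident' (i + 1)).comp hloss).integral_eq)
      (fun i _ ω => abs_sub_le_of_nonneg_of_le (hloss_bounds _ ω).1 (hloss_bounds _ ω).2 hm.1 hm.2)
      (fun i _ => (((hident' (i + 1)).comp hloss).variance_eq).trans_le hvar) ht

end Logistic

lemma MeasureTheory.ofReal_one_sub_add_le_measure {α : Type*} [MeasurableSpace α] {μ : Measure α}
    [IsProbabilityMeasure μ] {A B G : Set α} {a b : ℝ} (ha : 0 ≤ a) (hb : 0 ≤ b)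
    (hA : μ A ≤ ENNReal.ofReal a) (hB : μ B ≤ ENNReal.ofReal b) (hG : ∀ x ∉ A, x ∉ B → x ∈ G) :
    ENNReal.ofReal (1 - (a + b)) ≤ μ G := by
  have hcover : Set.univ ⊆ A ∪ B ∪ G := fun x _ => by
    by_cases hxA : x ∈ A
    · exact Or.inl (Or.inl hxA)
    by_cases hxB : x ∈ B
    · exact Or.inl (Or.inr hxB)
    exact Or.inr (hG x hxA hxB)
  have h1 : 1 ≤ ENNReal.ofReal (a + b) + μ G := calc
    1 = μ Set.univ := measure_univ.symm
    _ ≤ μ (A ∪ B ∪ G) := measure_mono hcover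
    _ ≤ μ (A ∪ B) + μ G := measure_union_le _ _
    _ ≤ μ A + μ B + μ G := by gcongr; exact measure_union_le _ _
    _ ≤ ENNReal.ofReal (a + b) + μ G := by
        rw [ENNReal.ofReal_add ha hb]; gcongr
  rw [ENNReal.ofReal_sub _ (add_nonneg ha hb), ENNReal.ofReal_one]
  exact tsub_le_iff_left.2 h1

theorem stmt_10_general (p : ℕ) (w : EuclideanSpace ℝ (Fin p)) (b : ℝ)
    (δ : ℝ) (hδ : δ ∈ Set.Ioo (0 : ℝ) 1)
    (Pp Pm : ℝ) (hPp : 0 ≤ Pp) (hPm : 0 ≤ Pm)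
    {Ω : Type*} [MeasurableSpace Ω] (μ : Measure Ω) [IsProbabilityMeasure μ]
    (Np Nm : ℕ) (hNp : 0 < Np) (hNm : 0 < Nm)
    (Zp Zm : ℕ → Ω → EuclideanSpace ℝ (Fin p))
    (hmeasp : ∀ i, Measurable (Zp i)) (hmeasm : ∀ i, Measurable (Zm i))
    (hindep : iIndepFun
      (fun k : Bool × ℕ => if k.1 then Zp k.2 else Zm k.2) μ)
    (hidentp : ∀ i, Measure.map (Zp i) μ = Measure.map (Zp 0) μ)
    (hidentm : ∀ i, Measure.map (Zm i) μ = Measure.map (Zm 0) μ)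
    (hspherep : ∀ i ω, ‖Zp i ω‖ = 1) (hspherem : ∀ i ω, ‖Zm i ω‖ = 1) :
    ENNReal.ofReal (1 - δ) ≤
      μ {ω |
        Pp * (∫ ω', Real.log (1 + Real.exp (-(1 : ℝ) * (⟪w, Zp 0 ω'⟫ + b))) ∂μ) +
          Pm * (∫ ω', Real.log (1 + Real.exp (-(-1 : ℝ) * (⟪w, Zm 0 ω'⟫ + b))) ∂μ) ≤
        (Pp / Np * ∑ i ∈ Finset.range Np,
            Real.log (1 + Real.exp (-(1 : ℝ) * (⟪w, Zp (i + 1) ω⟫ + b))) +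
          Pm / Nm * ∑ i ∈ Finset.range Nm,
            Real.log (1 + Real.exp (-(-1 : ℝ) * (⟪w, Zm (i + 1) ω⟫ + b)))) +
        (Pp * (Real.log (2 / δ) / (3 * Np)) *
            Real.log (1 + Real.exp (‖w‖ - (1 : ℝ) * b)) +
          Pm * (Real.log (2 / δ) / (3 * Nm)) *
            Real.log (1 + Real.exp (‖w‖ - (-1 : ℝ) * b))) +
        (Pp * Real.sqrt ((2 / Np) *
              (∫ ω', ⟪w, Zp 0 ω' - ∫ ω'', Zp 0 ω'' ∂μ⟫ ^ 2 ∂μ) * Real.log (2 / δ)) +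
          Pm * Real.sqrt ((2 / Nm) *
              (∫ ω', ⟪w, Zm 0 ω' - ∫ ω'', Zm 0 ω'' ∂μ⟫ ^ 2 ∂μ) * Real.log (2 / δ)))} := by
  obtain ⟨hδ0, hδ1⟩ := hδ
  have ht : 0 ≤ Real.log (2 / δ) := log_nonneg (by rw [le_div_iff₀ hδ0]; linarith)
  have hexp : exp (-Real.log (2 / δ)) = δ / 2 := by
    rw [← log_inv, inv_div, exp_log (by positivity)]
  have hpos := measure_logisticLoss_bernstein_lt_le w b (y := 1) (by norm_num) hmeasp
    (hindep.precomp (g := fun i => (true, i + 1)) fun i j h => by simpa using h) hidentp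
    (fun i ω => (hspherep i ω).le) hNp ht
  have hneg := measure_logisticLoss_bernstein_lt_le w b (y := -1) (by norm_num) hmeasm
    (hindep.precomp (g := fun i => (false, i + 1)) fun i j h => by simpa using h) hidentm
    (fun i ω => (hspherem i ω).le) hNm ht
  rw [hexp] at hpos hneg
  refine (ENNReal.ofReal_le_ofReal (by linarith)).trans
    (ofReal_one_sub_add_le_measure (by positivity) (by positivity) hpos hneg fun ω hωp hωm => ?_)
  simp only [Set.mem_ofPred_eq, not_lt, logisticLoss, softplus] at hωp hωm ⊢
  linear_combination mul_le_mul_of_nonneg_left hωp hPp + mul_le_mul_of_nonneg_left hωm hPm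

theorem stmt_10 (p : ℕ) (hp : 1 ≤ p) (w : EuclideanSpace ℝ (Fin p)) (b : ℝ)
    (δ : ℝ) (hδ : δ ∈ Set.Ioo (0 : ℝ) 1)
    (Pp Pm : ℝ) (hPp : 0 ≤ Pp) (hPm : 0 ≤ Pm) (hPsum : Pp + Pm = 1)
    {Ω : Type*} [MeasurableSpace Ω] (μ : Measure Ω) [IsProbabilityMeasure μ]
    (Np Nm : ℕ) (hNp : 0 < Np) (hNm : 0 < Nm)
    (Zp Zm : ℕ → Ω → EuclideanSpace ℝ (Fin p))
    (hmeasp : ∀ i, Measurable (Zp i)) (hmeasm : ∀ i, Measurable (Zm i))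
    (hindep : iIndepFun
      (fun k : Bool × ℕ => if k.1 then Zp k.2 else Zm k.2) μ)
    (hidentp : ∀ i, Measure.map (Zp i) μ = Measure.map (Zp 0) μ)
    (hidentm : ∀ i, Measure.map (Zm i) μ = Measure.map (Zm 0) μ)
    (hspherep : ∀ i ω, ‖Zp i ω‖ = 1) (hspherem : ∀ i ω, ‖Zm i ω‖ = 1) :
    ENNReal.ofReal (1 - δ) ≤
      μ {ω |
        Pp * (∫ ω', Real.log (1 + Real.exp (-(1 : ℝ) * (⟪w, Zp 0 ω'⟫ + b))) ∂μ) +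
          Pm * (∫ ω', Real.log (1 + Real.exp (-(-1 : ℝ) * (⟪w, Zm 0 ω'⟫ + b))) ∂μ) ≤
        (Pp / Np * ∑ i ∈ Finset.range Np,
            Real.log (1 + Real.exp (-(1 : ℝ) * (⟪w, Zp (i + 1) ω⟫ + b))) +
          Pm / Nm * ∑ i ∈ Finset.range Nm,
            Real.log (1 + Real.exp (-(-1 : ℝ) * (⟪w, Zm (i + 1) ω⟫ + b)))) +
        (Pp * (Real.log (2 / δ) / (3 * Np)) *
            Real.log (1 + Real.exp (‖w‖ - (1 : ℝ) * b)) +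
          Pm * (Real.log (2 / δ) / (3 * Nm)) *
            Real.log (1 + Real.exp (‖w‖ - (-1 : ℝ) * b))) +
        (Pp * Real.sqrt ((2 / Np) *
              (∫ ω', ⟪w, Zp 0 ω' - ∫ ω'', Zp 0 ω'' ∂μ⟫ ^ 2 ∂μ) * Real.log (2 / δ)) +
          Pm * Real.sqrt ((2 / Nm) *
              (∫ ω', ⟪w, Zm 0 ω' - ∫ ω'', Zm 0 ω'' ∂μ⟫ ^ 2 ∂μ) * Real.log (2 / δ)))} :=
  stmt_10_general p w b δ hδ Pp Pm hPp hPm μ Np Nm hNp hNm Zp Zm hmeasp hmeasm hindep hidentp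
    hidentm hspherep hspherem
end
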